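/- Let L > 0 and σ ∈ {1, −1}, and let A be the real 4×4 matrix with rows: (σ·(−1)/(8√3 L⁷), σ·(−1)/(8√3 L⁷), −1/(8L⁷), 7/(8L⁷)); (σ·(−1)/(8√3 L⁷), σ·(−1)/(8√3 L⁷), 7/(8L⁷), −1/(8L⁷)); (5/(24L⁷), −19/(24L⁷), σ/(8√3 L⁷), σ/(8√3 L⁷)); (−19/(24L⁷), 5/(24L⁷), σ/(8√3 L⁷), σ/(8√3 L⁷)). Then the characteristic polynomial of A is λ⁴ + (17/(12 L¹⁴))·λ² + 5/(12 L²⁸), and the eigenvalues of A over ℂ are exactly the four distinct purely imaginary numbers i/L⁷, −i/L⁷, i√15/(6L⁷), −i√15/(6L⁷). In particular A is diagonalizable over ℂ and nonsingular. -/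

import Mathlib

open Real Matrix Polynomial Complex

/-- The linearization matrix `A_{1,2}` at the circular equatorial relative equilibria. -/
noncomputable def A12 (L σ : ℝ) : Matrix (Fin 4) (Fin 4) ℝ :=
  !![σ * (-1) / (8 * Real.sqrt 3 * L ^ 7), σ * (-1) / (8 * Real.sqrt 3 * L ^ 7),
      -1 / (8 * L ^ 7), 7 / (8 * L ^ 7);
     σ * (-1) / (8 * Real.sqrt 3 * L ^ 7), σ * (-1) / (8 * Real.sqrt 3 * L ^ 7),
      7 / (8 * L ^ 7), -1 / (8 * L ^ 7);
     5 / (24 * L ^ 7), -19 / (24 * L ^ 7), σ / (8 * Real.sqrt 3 * L ^ 7),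
      σ / (8 * Real.sqrt 3 * L ^ 7);
     -19 / (24 * L ^ 7), 5 / (24 * L ^ 7), σ / (8 * Real.sqrt 3 * L ^ 7),
      σ / (8 * Real.sqrt 3 * L ^ 7)]

/-! In the basis `e₁ + e₂, e₃ + e₄, e₁ - e₂, e₃ - e₄` the matrix `A12 L σ` is block diagonal with
two traceless `2 × 2` blocks, of determinants `5 / (12 L¹⁴)` (this is where `σ² = 1` enters) and
`1 / L¹⁴`. Hence its characteristic polynomial is `(λ² + 1 / L¹⁴) (λ² + 5 / (12 L¹⁴))`, with the
four distinct roots `±i / L⁷`, `±i √15 / (6 L⁷)`. Eigenvectors for distinct eigenvalues are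
linearly independent, so they form an eigenbasis, and `det A12 = 5 / (12 L²⁸)` is the constant
coefficient of the characteristic polynomial. -/

namespace Matrix

variable {n : Type*} [Fintype n] [DecidableEq n]

theorem charpoly_eq_of_mul_eq_mul {R : Type*} [CommRing R] {M N P : Matrix n n R}
    (hP : IsUnit P) (h : M * P = P * N) : M.charpoly = N.charpoly := by
  obtain ⟨U, rfl⟩ := hP
  have : N = U.val⁻¹ * M * U.val := by
    rw [Matrix.mul_assoc, h, ← Matrix.mul_assoc]
    simp
  rw [this, charpoly_units_conj']

theorem charpoly_fin_two_of_trace_eq_zero {R : Type*} [CommRing R] [Nontrivial R]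
    (M : Matrix (Fin 2) (Fin 2) R) (h : M.trace = 0) : M.charpoly = X ^ 2 + C M.det := by
  rw [charpoly_fin_two, h, C_0, zero_mul, sub_zero]

theorem charpoly_fin_four_blockDiagonal {R : Type*} [CommRing R] (p q r s t u v w : R) :
    !![p, q, 0, 0; r, s, 0, 0; 0, 0, t, u; 0, 0, v, w].charpoly =
      !![p, q; r, s].charpoly * !![t, u; v, w].charpoly := by
  have : !![p, q, 0, 0; r, s, 0, 0; 0, 0, t, u; 0, 0, v, w] =
      reindex finSumFinEquiv finSumFinEquiv (fromBlocks !![p, q; r, s] 0 0 !![t, u; v, w]) := by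
    ext i j
    fin_cases i <;> fin_cases j <;> rfl
  rw [this, charpoly_reindex, charpoly_fromBlocks_zero₁₂]

theorem exists_isUnit_eq_mul_diagonal_mul_inv {K : Type*} [Field K] (M : Matrix n n K)
    (μ : n → K) (hμ : Function.Injective μ) (hspec : ∀ i, μ i ∈ spectrum K M) :
    ∃ P : Matrix n n K, IsUnit P ∧ M = P * diagonal μ * P⁻¹ := by
  have hvec (i : n) : ∃ v, Module.End.HasEigenvector (toLin' M) (μ i) v :=
    (Module.End.hasEigenvalue_iff_mem_spectrum.2 <|
      (spectrum_toLin' M).symm ▸ hspec i).exists_hasEigenvector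
  choose v hv using hvec
  set P : Matrix n n K := of fun j i => v i j
  have hP : IsUnit P :=
    linearIndependent_cols_iff_isUnit.1 (Module.End.eigenvectors_linearIndependent' _ μ hμ v hv)
  refine ⟨P, hP, ?_⟩
  have hMP : M * P = P * diagonal μ := by
    ext j i
    rw [mul_diagonal, mul_comm]
    simpa [P, mulVec, dotProduct, mul_apply] using congrFun (hv i).apply_eq_smul j
  rw [← hMP, mul_nonsing_inv_cancel_right _ _ ((isUnit_iff_isUnit_det P).1 hP)]

end Matrix

def symAntisymmBasis : Matrix (Fin 4) (Fin 4) ℝ :=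
  !![1, 0, 1, 0; 1, 0, -1, 0; 0, 1, 0, 1; 0, 1, 0, -1]

theorem isUnit_symAntisymmBasis : IsUnit symAntisymmBasis := by
  refine (isUnit_iff_isUnit_det _).2
    (isUnit_det_of_right_inverse (B := (1 / 2 : ℝ) • symAntisymmBasisᵀ) ?_)
  ext i j
  fin_cases i <;> fin_cases j <;>
    simp [symAntisymmBasis, mul_apply, Fin.sum_univ_four] <;> norm_num

theorem A12_mul_symAntisymmBasis (L σ : ℝ) :
    A12 L σ * symAntisymmBasis = symAntisymmBasis *
      !![-σ / (4 * √3 * L ^ 7), 3 / (4 * L ^ 7), 0, 0;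
         -7 / (12 * L ^ 7), σ / (4 * √3 * L ^ 7), 0, 0;
         0, 0, 0, -1 / L ^ 7;
         0, 0, 1 / L ^ 7, 0] := by
  ext i j
  fin_cases i <;> fin_cases j <;>
    simp [A12, symAntisymmBasis, mul_apply, Fin.sum_univ_four] <;> ring

theorem A12_charpoly (L σ : ℝ) (hL : L ≠ 0) (hσ : σ ^ 2 = 1) :
    (A12 L σ).charpoly =
      (X ^ 2 + C ((1 / L ^ 7) ^ 2)) * (X ^ 2 + C ((√15 / (6 * L ^ 7)) ^ 2)) := by
  rw [charpoly_eq_of_mul_eq_mul isUnit_symAntisymmBasis (A12_mul_symAntisymmBasis L σ),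
    charpoly_fin_four_blockDiagonal, mul_comm,
    charpoly_fin_two_of_trace_eq_zero _ (by rw [trace_fin_two_of]; ring),
    charpoly_fin_two_of_trace_eq_zero _ (by rw [trace_fin_two_of]; ring),
    det_fin_two_of, det_fin_two_of]
  have h3 : √3 ^ 2 = 3 := Real.sq_sqrt (by norm_num)
  have h15 : √15 ^ 2 = 15 := Real.sq_sqrt (by norm_num)
  congr 3
  · ring
  · field_simp
    rw [h3, h15, hσ]
    ring

namespace Complex

theorem sq_add_ofReal_sq_eq_zero_iff (z : ℂ) (a : ℝ) :
    z ^ 2 + (a : ℂ) ^ 2 = 0 ↔ z = I * a ∨ z = -(I * a) := by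
  have : z ^ 2 + (a : ℂ) ^ 2 = (z - I * a) * (z + I * a) := by
    ring_nf
    rw [I_sq]
    ring
  rw [this, mul_eq_zero, sub_eq_zero, add_eq_zero_iff_eq_neg]

theorem pairwise_ne_I_mul {a b : ℝ} (ha : 0 < a) (hb : 0 < b) (hab : a ≠ b) :
    [I * a, -(I * a), I * b, -(I * b)].Pairwise (· ≠ ·) := by
  refine List.Pairwise.of_map (S := (· ≠ ·)) im (fun _ _ h e => h (congrArg im e)) ?_
  have him : [I * a, -(I * a), I * b, -(I * b)].map im = [a, -a, b, -b] := by simp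
  rw [him]
  grind [List.pairwise_cons]

theorem spectrum_map_ofReal_of_charpoly_eq {n : Type*} [Fintype n] [DecidableEq n]
    {M : Matrix n n ℝ} {a b : ℝ} (h : M.charpoly = (X ^ 2 + C (a ^ 2)) * (X ^ 2 + C (b ^ 2))) :
    spectrum ℂ (M.map ofReal) = {I * a, -(I * a), I * b, -(I * b)} := by
  ext z
  rw [show M.map ofReal = M.map ofRealHom from rfl, Matrix.mem_spectrum_iff_isRoot_charpoly,
    Matrix.charpoly_map, h]
  simp [sq_add_ofReal_sq_eq_zero_iff, or_assoc]

end Complex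

/-- The linearization at the equatorial equilibria has characteristic
polynomial `λ⁴ + 17λ²/(12L¹⁴) + 5/(12L²⁸)` and four distinct purely imaginary eigenvalues
`±i/L⁷`, `±i√15/(6L⁷)`; in particular it is diagonalizable over `ℂ` and nonsingular. -/
theorem linearization_equatorial_spectrum (L : ℝ) (hL : 0 < L) (σ : ℝ)
    (hσ : σ = 1 ∨ σ = -1) :
    (A12 L σ).charpoly = X ^ 4 + C (17 / (12 * L ^ 14)) * X ^ 2 + C (5 / (12 * L ^ 28)) ∧
    spectrum ℂ ((A12 L σ).map Complex.ofReal)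
      = {Complex.I / (L : ℂ) ^ 7, -(Complex.I / (L : ℂ) ^ 7),
         Complex.I * (Real.sqrt 15 : ℝ) / (6 * (L : ℂ) ^ 7),
         -(Complex.I * (Real.sqrt 15 : ℝ) / (6 * (L : ℂ) ^ 7))} ∧
    ([Complex.I / (L : ℂ) ^ 7, -(Complex.I / (L : ℂ) ^ 7),
      Complex.I * (Real.sqrt 15 : ℝ) / (6 * (L : ℂ) ^ 7),
      -(Complex.I * (Real.sqrt 15 : ℝ) / (6 * (L : ℂ) ^ 7))] : List ℂ).Pairwise (· ≠ ·) ∧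
    (∃ (P : Matrix (Fin 4) (Fin 4) ℂ) (d : Fin 4 → ℂ), IsUnit P ∧
      (A12 L σ).map Complex.ofReal = P * Matrix.diagonal d * P⁻¹) ∧
    (A12 L σ).det ≠ 0 := by
  set a : ℝ := 1 / L ^ 7
  set b : ℝ := √15 / (6 * L ^ 7)
  have h15 : √15 ^ 2 = 15 := Real.sq_sqrt (by norm_num)
  have hab : a ≠ b := fun h => by
    simp only [a, b] at h
    field_simp at h
    nlinarith
  have hchar : (A12 L σ).charpoly = (X ^ 2 + C (a ^ 2)) * (X ^ 2 + C (b ^ 2)) :=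
    A12_charpoly L σ hL.ne' (by rcases hσ with rfl | rfl <;> norm_num)
  have hsum : 17 / (12 * L ^ 14) = a ^ 2 + b ^ 2 := by
    simp only [a, b]
    field_simp
    rw [h15]
    ring
  have hprod : 5 / (12 * L ^ 28) = a ^ 2 * b ^ 2 := by
    simp only [a, b]
    field_simp
    rw [h15]
    ring
  have hexpand : (A12 L σ).charpoly =
      X ^ 4 + C (17 / (12 * L ^ 14)) * X ^ 2 + C (5 / (12 * L ^ 28)) := by
    rw [hchar, hsum, hprod, C_add, C_mul]
    ring
  rw [show I / (L : ℂ) ^ 7 = I * a by push_cast [a]; ring,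
    show I * (√15 : ℝ) / (6 * (L : ℂ) ^ 7) = I * b by push_cast [b]; ring]
  have hspec := Complex.spectrum_map_ofReal_of_charpoly_eq hchar
  have hdistinct := Complex.pairwise_ne_I_mul (by positivity) (by positivity) hab
  obtain ⟨P, hP, hdiag⟩ := Matrix.exists_isUnit_eq_mul_diagonal_mul_inv ((A12 L σ).map ofReal)
    ![I * a, -(I * a), I * b, -(I * b)] (List.nodup_ofFn.1 hdistinct)
    (fun i => by fin_cases i <;> simp [hspec])
  refine ⟨hexpand, hspec, hdistinct, ⟨P, _, hP, hdiag⟩, ?_⟩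
  rw [Matrix.det_eq_sign_charpoly_coeff, hexpand]
  simpa [coeff_C, coeff_X_pow] using hL.ne'
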